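/- arXiv:2308.06658 — 2 statements merged into one kernel-verified Lean document; each statement's English description precedes it below -/
import Mathlib

section
/- For any three points A, B, C in the plane, there exist two distinct points P and Q such that the multiset of distances {dist(P,A), dist(P,B), dist(P,C)} equals the multiset of distances {dist(Q,A), dist(Q,B), dist(Q,C)}. -/
/-!
Let `M` be the midpoint of `AB` and `v ≠ 0` a vector orthogonal to `M - C` (it exists because the
plane has dimension 2). The point reflection in `M` swaps `A` and `B` and maps `M + v` to `M - v`,
so `M + v` and `M - v` see `A` and `B` at swapped distances; and both are at the same distance
from `C` by Pythagoras, since `v ⊥ M - C`.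
-/

open Module

lemma exists_ne_zero_inner_eq_zero {E : Type*} [NormedAddCommGroup E] [InnerProductSpace ℝ E]
    [FiniteDimensional ℝ E] (hE : 1 < finrank ℝ E) (u : E) : ∃ v ≠ 0, inner ℝ u v = 0 := by
  have hker : LinearMap.ker (innerₛₗ ℝ u) ≠ ⊥ :=
    LinearMap.ker_ne_bot_of_finrank_lt (by rwa [finrank_self])
  obtain ⟨v, hv, hv0⟩ := Submodule.exists_mem_ne_zero_of_ne_bot hker
  exact ⟨v, hv0, hv⟩

lemma dist_midpoint_add_left_eq_dist_midpoint_sub_right {E : Type*} [NormedAddCommGroup E]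
    [Module ℝ E] (A B v : E) :
    dist (midpoint ℝ A B + v) A = dist (midpoint ℝ A B - v) B := by
  rw [dist_eq_norm, dist_eq_norm, ← norm_neg, midpoint_eq_smul_add, invOf_eq_inv]
  congr 1
  module

lemma dist_add_eq_dist_sub_of_inner_eq_zero {E : Type*} [NormedAddCommGroup E]
    [InnerProductSpace ℝ E] {M C v : E} (h : inner ℝ (M - C) v = 0) :
    dist (M + v) C = dist (M - v) C := by
  rw [dist_eq_norm, dist_eq_norm, add_sub_right_comm, sub_right_comm]
  exact (norm_sub_eq_norm_add (real_inner_comm (M - C) v ▸ h)).symm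

theorem unlabelled_range_aliasing (A B C : EuclideanSpace ℝ (Fin 2)) :
    ∃ P Q : EuclideanSpace ℝ (Fin 2), P ≠ Q ∧
      ({dist P A, dist P B, dist P C} : Multiset ℝ) =
        ({dist Q A, dist Q B, dist Q C} : Multiset ℝ) := by
  obtain ⟨v, hv0, hv⟩ := exists_ne_zero_inner_eq_zero (by simp) (midpoint ℝ A B - C)
  have hBA := dist_midpoint_add_left_eq_dist_midpoint_sub_right B A v
  rw [midpoint_comm] at hBA
  set M := midpoint ℝ A B
  refine ⟨M + v, M - v, fun h ↦ hv0 ?_, ?_⟩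
  · have h2v : (2 : ℝ) • v = 0 :=
      calc (2 : ℝ) • v = (M + v) - (M - v) := by module
        _ = 0 := by rw [h, sub_self]
    exact (smul_eq_zero.mp h2v).resolve_left two_ne_zero
  · rw [dist_midpoint_add_left_eq_dist_midpoint_sub_right, hBA,
      dist_add_eq_dist_sub_of_inner_eq_zero hv]
    exact Multiset.cons_swap _ _ _
end

section
/- For any three non-collinear points A, B, C in the plane, there exists a pair of distinct points P and Q such that the parallelogram and isosceles conditions hold: the midpoint of PQ is the midpoint of AB, and dist(C,P) = dist(C,Q). Consequently the unlabelled range measurements from P and from Q to {A,B,C} coincide. -/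
/-! The point reflection through `M = midpoint A B` swaps `A` and `B`, so any pair `P, Q` with
midpoint `M` has `dist P A = dist Q B` and `dist P B = dist Q A`; the range multisets then agree as
soon as `dist P C = dist Q C`, i.e. `C` lies on the perpendicular bisector of `PQ`. Taking
`P = M + v`, `Q = M - v` with `v ≠ 0` orthogonal to `C - M`, which exists in dimension at least
two, achieves this. -/

open Module AffineSubspace

open scoped RealInnerProductSpace

theorem dist_eq_dist_of_midpoint_eq {V P : Type*} [SeminormedAddCommGroup V] [Module ℝ V]
    [PseudoMetricSpace P] [NormedAddTorsor V P] {p q a b : P}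
    (h : midpoint ℝ p q = midpoint ℝ a b) : dist p a = dist q b := by
  rw [midpoint_eq_midpoint_iff_vsub_eq_vsub] at h
  rw [dist_eq_norm_vsub V, h, ← dist_eq_norm_vsub V, dist_comm]

section Euclidean

variable {V P : Type*} [NormedAddCommGroup V] [InnerProductSpace ℝ V] [MetricSpace P]
  [NormedAddTorsor V P]

theorem exists_ne_zero_inner_eq_zero_s2 [FiniteDimensional ℝ V] (h : 2 ≤ finrank ℝ V) (w : V) :
    ∃ v : V, v ≠ 0 ∧ ⟪w, v⟫ = 0 := by
  have hK : finrank ℝ (ℝ ∙ w) ≤ 1 := by simpa using finrank_span_le_card ({w} : Set V)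
  have hKperp : (ℝ ∙ w)ᗮ ≠ ⊥ := by
    rw [← Submodule.one_le_finrank_iff]
    have := (ℝ ∙ w).finrank_add_finrank_orthogonal
    omega
  obtain ⟨v, hv, hv0⟩ := Submodule.exists_mem_ne_zero_of_ne_bot hKperp
  exact ⟨v, hv0, Submodule.inner_right_of_mem_orthogonal (Submodule.mem_span_singleton_self w) hv⟩

theorem exists_ne_midpoint_eq_dist_eq [FiniteDimensional ℝ V] (h : 2 ≤ finrank ℝ V) (m c : P) :
    ∃ p q : P, p ≠ q ∧ midpoint ℝ p q = m ∧ dist c p = dist c q := by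
  obtain ⟨v, hv0, hv⟩ := exists_ne_zero_inner_eq_zero_s2 h (c -ᵥ m)
  refine ⟨v +ᵥ m, Equiv.pointReflection m (v +ᵥ m), ?_, midpoint_pointReflection_right _ _, ?_⟩
  · intro hfix
    replace hfix : v +ᵥ m = m := (AffineEquiv.pointReflection_fixed_iff_of_module ℝ).1 hfix.symm
    exact hv0 (by rw [← vadd_vsub v m, hfix, vsub_self])
  · rw [← mem_perpBisector_iff_dist_eq, mem_perpBisector_pointReflection_iff_inner_eq_zero,
      vadd_vsub]
    exact hv

end Euclidean

theorem exists_confounding_pair_range_only_general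
    (A B C : EuclideanSpace ℝ (Fin 2)) :
    ∃ P Q : EuclideanSpace ℝ (Fin 2), P ≠ Q ∧
      midpoint ℝ P Q = midpoint ℝ A B ∧
      dist C P = dist C Q ∧
      ({dist P A, dist P B, dist P C} : Multiset ℝ) =
        ({dist Q A, dist Q B, dist Q C} : Multiset ℝ) := by
  obtain ⟨P, Q, hPQ, hmid, hC⟩ :=
    exists_ne_midpoint_eq_dist_eq (by simp) (midpoint ℝ A B) C
  have hA : dist P A = dist Q B := dist_eq_dist_of_midpoint_eq hmid
  have hB : dist P B = dist Q A := dist_eq_dist_of_midpoint_eq (hmid.trans (midpoint_comm A B))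
  refine ⟨P, Q, hPQ, hmid, hC, ?_⟩
  rw [hA, hB, dist_comm P C, hC, dist_comm C Q]
  exact Multiset.cons_swap _ _ _

theorem exists_confounding_pair_range_only
    (A B C : EuclideanSpace ℝ (Fin 2))
    (hncol : ¬ Collinear ℝ ({A, B, C} : Set (EuclideanSpace ℝ (Fin 2)))) :
    ∃ P Q : EuclideanSpace ℝ (Fin 2), P ≠ Q ∧
      midpoint ℝ P Q = midpoint ℝ A B ∧
      dist C P = dist C Q ∧
      ({dist P A, dist P B, dist P C} : Multiset ℝ) =
        ({dist Q A, dist Q B, dist Q C} : Multiset ℝ) :=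
  exists_confounding_pair_range_only_general A B C
end
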